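/- In the two-period Stackelberg game, elite B's period-2 best response to inherited opinion p₁ under state s₂ is: keep p₁ unchanged if the current policy already matches B's preferred side (𝟙{p₁ ≥ 1/2} = 1 - s₂); move to exactly 1/2 if the current policy mismatches B's preference and c(|1/2 - p₁|) ≤ H (equivalently |1/2 - p₁| ≤ Δ, with the claim using strict inequality for strict optimality); and keep p₁ unchanged if the mismatch holds but |1/2 - p₁| ≥ Δ. Formally, these choices maximize H·𝟙{𝟙{p₂ ≥ 1/2, with tie favoring B at p₂ = 1/2} = 1 - s₂} - c(p₂ - p₁) over p₂ ∈ [0,1]. -/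

import Mathlib

/-- Elite B's period-2 payoff from moving opinion to `p₂`, given inherited `p₁` and B's
preferred policy `pref = 1 - s₂`: the implemented policy is `1` iff `p₂ > 1/2`, with the tie
at `p₂ = 1/2` broken in B's favor; B gains `H` iff the implemented policy equals `pref`. -/
noncomputable def payB (c : ℝ → ℝ) (H p₁ : ℝ) (pref : Bool) (p₂ : ℝ) : ℝ :=
  (if (if (1 : ℝ) / 2 < p₂ then true else if p₂ = 1 / 2 then pref else false) = pref
    then H else 0) - c (p₂ - p₁)

private lemma c_eq_abs (c : ℝ → ℝ) (hceven : ∀ x, c (-x) = c x) (x : ℝ) : c x = c |x| := by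
  rcases le_or_gt 0 x with h | h
  · rw [abs_of_nonneg h]
  · rw [abs_of_neg h, hceven]

private lemma c_mono' (c : ℝ → ℝ) (hceven : ∀ x, c (-x) = c x)
    (hcmono : StrictMonoOn c (Set.Ici (0 : ℝ))) {x y : ℝ} (h : |x| ≤ |y|) : c x ≤ c y := by
  rw [c_eq_abs c hceven x, c_eq_abs c hceven y]
  exact hcmono.monotoneOn (abs_nonneg x) (abs_nonneg y) h

private lemma c_nonneg (c : ℝ → ℝ) (hc0 : c 0 = 0) (hceven : ∀ x, c (-x) = c x)
    (hcmono : StrictMonoOn c (Set.Ici (0 : ℝ))) (x : ℝ) : 0 ≤ c x := by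
  have := c_mono' c hceven hcmono (x := 0) (y := x) (by simp)
  rwa [hc0] at this

private lemma payB_gain_true (c : ℝ → ℝ) (H p₁ p₂ : ℝ) (h : (1 : ℝ) / 2 ≤ p₂) :
    payB c H p₁ true p₂ = H - c (p₂ - p₁) := by
  unfold payB
  have hb : (if (1 : ℝ) / 2 < p₂ then true else if p₂ = 1 / 2 then true else false) = true := by
    split_ifs with a b
    · rfl
    · rfl
    · exact absurd ((lt_or_eq_of_le h).resolve_right (fun e => b e.symm)) a
  rw [hb]; simp

private lemma payB_lose_true (c : ℝ → ℝ) (H p₁ p₂ : ℝ) (h : p₂ < (1 : ℝ) / 2) :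
    payB c H p₁ true p₂ = - c (p₂ - p₁) := by
  unfold payB
  have hb : (if (1 : ℝ) / 2 < p₂ then true else if p₂ = 1 / 2 then true else false) = false := by
    split_ifs with a b
    · linarith
    · rw [b] at h; linarith
    · rfl
  rw [hb]; simp

private lemma payB_gain_false (c : ℝ → ℝ) (H p₁ p₂ : ℝ) (h : p₂ ≤ (1 : ℝ) / 2) :
    payB c H p₁ false p₂ = H - c (p₂ - p₁) := by
  unfold payB
  have hb : (if (1 : ℝ) / 2 < p₂ then true else if p₂ = 1 / 2 then false else false) = false := by
    split_ifs with a b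
    · linarith
    · rfl
    · rfl
  rw [hb]; simp

private lemma payB_lose_false (c : ℝ → ℝ) (H p₁ p₂ : ℝ) (h : (1 : ℝ) / 2 < p₂) :
    payB c H p₁ false p₂ = - c (p₂ - p₁) := by
  unfold payB
  have hb : (if (1 : ℝ) / 2 < p₂ then true else if p₂ = 1 / 2 then false else false) = true := by
    rw [if_pos h]
  rw [hb]; simp

/-- Elite B's period-2 best response. -/
theorem eliteB_best_response
    (c : ℝ → ℝ) (H Δ : ℝ)
    (hc0 : c 0 = 0)
    (hceven : ∀ x, c (-x) = c x)
    (hcmono : StrictMonoOn c (Set.Ici (0 : ℝ)))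
    (hcconv : StrictConvexOn ℝ Set.univ c)
    (hH : 0 < H) (hΔ : 0 < Δ) (hcΔ : c Δ = H)
    (p₁ : ℝ) (hp₁ : p₁ ∈ Set.Icc (0 : ℝ) 1) (pref : Bool) :
    ((((1 : ℝ) / 2 ≤ p₁) ↔ pref = true) →
        IsMaxOn (payB c H p₁ pref) (Set.Icc (0 : ℝ) 1) p₁) ∧
    (¬(((1 : ℝ) / 2 ≤ p₁) ↔ pref = true) → |1 / 2 - p₁| < Δ →
        IsMaxOn (payB c H p₁ pref) (Set.Icc (0 : ℝ) 1) (1 / 2)) ∧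
    (¬(((1 : ℝ) / 2 ≤ p₁) ↔ pref = true) → Δ ≤ |1 / 2 - p₁| →
        IsMaxOn (payB c H p₁ pref) (Set.Icc (0 : ℝ) 1) p₁) := by
  have hcn := c_nonneg c hc0 hceven hcmono
  have hcm : ∀ {x y : ℝ}, |x| ≤ |y| → c x ≤ c y := fun h => c_mono' c hceven hcmono h
  refine ⟨?_, ?_, ?_⟩
  · -- match: stay at p₁, payoff H
    intro h p₂ _
    rw [Set.mem_setOf_eq]
    rcases pref with _ | _
    · have h1 : ¬ (1 / 2 : ℝ) ≤ p₁ := by simpa using h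
      push_neg at h1
      rw [payB_gain_false c H p₁ p₁ (le_of_lt h1), sub_self, hc0]
      rcases le_or_gt p₂ (1 / 2 : ℝ) with h2 | h2
      · rw [payB_gain_false c H p₁ p₂ h2]; linarith [hcn (p₂ - p₁)]
      · rw [payB_lose_false c H p₁ p₂ h2]; linarith [hcn (p₂ - p₁)]
    · have h1 : (1 / 2 : ℝ) ≤ p₁ := h.mpr rfl
      rw [payB_gain_true c H p₁ p₁ h1, sub_self, hc0]
      rcases le_or_gt (1 / 2 : ℝ) p₂ with h2 | h2
      · rw [payB_gain_true c H p₁ p₂ h2]; linarith [hcn (p₂ - p₁)]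
      · rw [payB_lose_true c H p₁ p₂ h2]; linarith [hcn (p₂ - p₁)]
  · -- mismatch, close: move to 1/2
    intro h hd p₂ _
    have hd' : c (1 / 2 - p₁) < H := by
      rw [← hcΔ, c_eq_abs c hceven (1 / 2 - p₁)]
      exact hcmono (Set.mem_Ici.mpr (abs_nonneg _)) (Set.mem_Ici.mpr (le_of_lt hΔ)) hd
    rw [Set.mem_setOf_eq]
    rcases pref with _ | _
    · have h1 : (1 / 2 : ℝ) ≤ p₁ := by
        by_contra hcon; exact h (iff_of_false hcon (by simp))
      rw [payB_gain_false c H p₁ (1 / 2) (le_refl _)]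
      rcases le_or_gt p₂ (1 / 2 : ℝ) with h2 | h2
      · rw [payB_gain_false c H p₁ p₂ h2]
        have : c (1 / 2 - p₁) ≤ c (p₂ - p₁) := by
          apply hcm
          rw [abs_of_nonpos (by linarith), abs_of_nonpos (by linarith)]; linarith
        linarith
      · rw [payB_lose_false c H p₁ p₂ h2]; linarith [hcn (p₂ - p₁)]
    · have h1 : ¬ (1 / 2 : ℝ) ≤ p₁ := fun hcon => h (iff_of_true hcon rfl)
      push_neg at h1
      rw [payB_gain_true c H p₁ (1 / 2) (le_refl _)]
      rcases le_or_gt (1 / 2 : ℝ) p₂ with h2 | h2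
      · rw [payB_gain_true c H p₁ p₂ h2]
        have : c (1 / 2 - p₁) ≤ c (p₂ - p₁) := by
          apply hcm
          rw [abs_of_nonneg (by linarith), abs_of_nonneg (by linarith)]; linarith
        linarith
      · rw [payB_lose_true c H p₁ p₂ h2]; linarith [hcn (p₂ - p₁)]
  · -- mismatch, far: stay at p₁
    intro h hd p₂ _
    have hHle : H ≤ c (1 / 2 - p₁) := by
      rw [← hcΔ, c_eq_abs c hceven (1 / 2 - p₁)]
      exact hcmono.monotoneOn (Set.mem_Ici.mpr (le_of_lt hΔ))
        (Set.mem_Ici.mpr (le_trans (le_of_lt hΔ) hd)) hd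
    rw [Set.mem_setOf_eq]
    rcases pref with _ | _
    · have h1 : (1 / 2 : ℝ) ≤ p₁ := by
        by_contra hcon; exact h (iff_of_false hcon (by simp))
      -- payB at p₁: if p₁ > 1/2 lose: -c 0 = 0; if p₁ = 1/2 gain: H.
      rcases eq_or_lt_of_le h1 with h2 | h2
      · subst h2
        rw [payB_gain_false c H (1/2) (1/2) (le_refl _), sub_self, hc0]
        rcases le_or_gt p₂ (1 / 2 : ℝ) with h3 | h3
        · rw [payB_gain_false c H (1/2) p₂ h3]; linarith [hcn (p₂ - 1/2)]
        · rw [payB_lose_false c H (1/2) p₂ h3]; linarith [hcn (p₂ - 1/2)]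
      · rw [payB_lose_false c H p₁ p₁ h2, sub_self, hc0]
        rcases le_or_gt p₂ (1 / 2 : ℝ) with h3 | h3
        · rw [payB_gain_false c H p₁ p₂ h3]
          have : c (1 / 2 - p₁) ≤ c (p₂ - p₁) := by
            apply hcm
            rw [abs_of_nonpos (by linarith), abs_of_nonpos (by linarith)]; linarith
          linarith
        · rw [payB_lose_false c H p₁ p₂ h3]; linarith [hcn (p₂ - p₁)]
    · have h1 : ¬ (1 / 2 : ℝ) ≤ p₁ := fun hcon => h (iff_of_true hcon rfl)
      push_neg at h1
      rw [payB_lose_true c H p₁ p₁ h1, sub_self, hc0]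
      rcases le_or_gt (1 / 2 : ℝ) p₂ with h3 | h3
      · rw [payB_gain_true c H p₁ p₂ h3]
        have : c (1 / 2 - p₁) ≤ c (p₂ - p₁) := by
          apply hcm
          rw [abs_of_nonneg (by linarith), abs_of_nonneg (by linarith)]; linarith
        linarith
      · rw [payB_lose_true c H p₁ p₂ h3]; linarith [hcn (p₂ - p₁)]
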